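/- The function z ↦ G(z) = z + 2 - 1/C(1,z), where C(1,z) = (2 + z - √(z·(4+z)))/2, is strictly decreasing on (0,∞). -/
import Mathlib


noncomputable def C1 (z : ℝ) : ℝ := (2 + z - Real.sqrt (z * (4 + z))) / 2

noncomputable def G (z : ℝ) : ℝ := z + 2 - 1 / C1 z

lemma G_eq (z : ℝ) (hz : 0 < z) : G z = 2 / (z + 2 + Real.sqrt (z * (4 + z))) := by
  set s := Real.sqrt (z * (4 + z)) with hsdef
  have hs2 : s ^ 2 = z * (4 + z) := Real.sq_sqrt (by positivity)
  have hs0 : 0 ≤ s := Real.sqrt_nonneg _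
  have hden : 0 < z + 2 + s := by linarith
  have hkey : (2 + z - s) * (z + 2 + s) = 4 := by nlinarith
  have hpos : 0 < 2 + z - s := by nlinarith
  have hC : C1 z ≠ 0 := by
    unfold C1; rw [← hsdef]; positivity
  unfold G C1
  rw [← hsdef]
  have h2 : (2 + z - s) / 2 ≠ 0 := by positivity
  field_simp
  nlinarith

theorem G_strictAnti : StrictAntiOn G (Set.Ioi (0 : ℝ)) := by
  intro x hx y hy hxy
  simp only [Set.mem_Ioi] at hx hy
  rw [G_eq x hx, G_eq y hy]
  have hsx : 0 ≤ Real.sqrt (x * (4 + x)) := Real.sqrt_nonneg _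
  have hmono : Real.sqrt (x * (4 + x)) ≤ Real.sqrt (y * (4 + y)) := by
    apply Real.sqrt_le_sqrt; nlinarith
  have hdx : 0 < x + 2 + Real.sqrt (x * (4 + x)) := by linarith
  have hdy : 0 < y + 2 + Real.sqrt (y * (4 + y)) := by linarith
  apply div_lt_div_of_pos_left (by norm_num) hdx
  linarith
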